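/- For every k ≥ 5 and every surjective colouring Δ : ℕ^(2) ↠ [k], the set F_Δ meets {5, 6, 7}: there exists m ∈ {5, 6, 7} and an infinite X ⊆ ℕ that is exactly m-coloured. -/

import Mathlib

/-- The colour of the unordered edge `{x, y}` (only values on distinct pairs matter). -/
def edgeCol (Δ : ℕ → ℕ → ℕ) (x y : ℕ) : ℕ := Δ (min x y) (max x y)

/-- `colourSet Δ X` is the set of colours attained by `Δ` on edges with both endpoints in `X`. -/
def colourSet (Δ : ℕ → ℕ → ℕ) (X : Set ℕ) : Set ℕ :=
  {c | ∃ x ∈ X, ∃ y ∈ X, x ≠ y ∧ edgeCol Δ x y = c}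

/-- `Δ` is a surjective colouring `ℕ^(2) ↠ [k]` of the edges of the complete
graph on `ℕ` with colour set `[k] = {1, …, k}`. -/
def IsColouring (Δ : ℕ → ℕ → ℕ) (k : ℕ) : Prop :=
  (∀ x y : ℕ, x ≠ y → edgeCol Δ x y ∈ Finset.Icc 1 k) ∧
  (∀ c ∈ Finset.Icc 1 k, ∃ x y : ℕ, x ≠ y ∧ edgeCol Δ x y = c)

/-- `F_Δ`: the set of `m ∈ [k]` for which some infinite `X ⊆ ℕ` is exactly `m`-coloured. -/
def FSet (Δ : ℕ → ℕ → ℕ) (k : ℕ) : Set ℕ :=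
  {m | m ∈ Finset.Icc 1 k ∧ ∃ X : Set ℕ, X.Infinite ∧ (colourSet Δ X).ncard = m}

/-!
For `k ≤ 7` all of `ℕ` is exactly `k`-coloured. For `k ≥ 8` suppose that no infinite set has
`5`, `6` or `7` colours. Start from an infinite monochromatic set (Ramsey) and add vertices one
at a time until all `k` colours appear: at the step where the count first reaches `8` we get an
infinite `G` with at most four colours and a vertex `v ∉ G` sending at least four colours to `G`
that do not occur inside `G`. By pigeonhole `v` sends a single colour `c₀` to an infinite `S ⊆ G`.
Pick a set `N` of `r` of the new colours other than `c₀` (`r = 4` if `c₀` occurs in `G`, `r = 3`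
otherwise) and a vertex `u c ∈ G` with `edgeCol Δ v (u c) = c` for each `c ∈ N`. The colours of
`T J = {v} ∪ S ∪ u '' J` (`J ⊆ N`) are `c₀`, the colours inside `S ∪ u '' J`, and exactly `J`.
Each `T (N \ {c})` has at most seven colours, hence at most four, which forces the colours inside
`S ∪ u '' (N \ {c})` to lie among `c₀` and the colours of `S`. As `r ≥ 3`, every edge inside
`S ∪ u '' N` avoids some `u c`, so `T N` has exactly five colours: a contradiction.
-/

open Set Filter

lemma Set.Infinite.exists_infinite_fiber {α β : Type*} {s : Set α} {t : Set β} {f : α → β}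
    (hs : s.Infinite) (hf : MapsTo f s t) (ht : t.Finite) :
    ∃ b, {x ∈ s | f x = b}.Infinite := by
  by_contra! h
  exact hs ((ht.biUnion fun b _ => h b).subset fun x hx => mem_biUnion (hf hx) ⟨hx, rfl⟩)

lemma exists_insert_crossing {α : Type*} (P : Set α → Prop) {X : Set α} (F : Finset α)
    (hX : ¬ P X) (hXF : P (X ∪ F)) :
    ∃ Y, X ⊆ Y ∧ ∃ v ∉ Y, ¬ P Y ∧ P (insert v Y) := by
  classical
  induction F using Finset.induction_on with
  | empty => simp_all
  | insert a F _ ih =>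
    by_cases hF : P (X ∪ F)
    · exact ih hF
    · rw [Finset.coe_insert, Set.union_insert] at hXF
      refine ⟨X ∪ F, subset_union_left, a, fun ha => ?_, hF, hXF⟩
      exact hF (by rwa [insert_eq_of_mem ha] at hXF)

section Colouring

variable {Δ : ℕ → ℕ → ℕ} {C : Set ℕ}

lemma edgeCol_comm (Δ : ℕ → ℕ → ℕ) (x y : ℕ) : edgeCol Δ x y = edgeCol Δ y x := by
  simp only [edgeCol, min_comm, max_comm]

lemma edgeCol_mem_colourSet {X : Set ℕ} {x y : ℕ} (hx : x ∈ X) (hy : y ∈ X) (hxy : x ≠ y) :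
    edgeCol Δ x y ∈ colourSet Δ X :=
  ⟨x, hx, y, hy, hxy, rfl⟩

lemma colourSet_mono (Δ : ℕ → ℕ → ℕ) : Monotone (colourSet Δ) := by
  rintro X Y hXY c ⟨x, hx, y, hy, hxy, rfl⟩
  exact edgeCol_mem_colourSet (hXY hx) (hXY hy) hxy

lemma colourSet_nonempty {X : Set ℕ} (hX : X.Nontrivial) : (colourSet Δ X).Nonempty :=
  let ⟨_, hx, _, hy, hxy⟩ := hX
  ⟨_, edgeCol_mem_colourSet hx hy hxy⟩

lemma colourSet_insert (Δ : ℕ → ℕ → ℕ) {X : Set ℕ} {v : ℕ} (hv : v ∉ X) :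
    colourSet Δ (insert v X) = colourSet Δ X ∪ edgeCol Δ v '' X := by
  refine Subset.antisymm ?_ (union_subset (colourSet_mono Δ (subset_insert v X)) ?_)
  · rintro c ⟨x, rfl | hx, y, rfl | hy, hxy, rfl⟩
    · exact absurd rfl hxy
    · exact Or.inr ⟨y, hy, rfl⟩
    · exact Or.inr ⟨x, hx, edgeCol_comm Δ _ x⟩
    · exact Or.inl (edgeCol_mem_colourSet hx hy hxy)
  · rintro c ⟨y, hy, rfl⟩
    exact edgeCol_mem_colourSet (mem_insert v X) (mem_insert_of_mem v hy)
      (ne_of_mem_of_not_mem hy hv).symm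

lemma colourSet_subset (hΔ : ∀ x y, x ≠ y → edgeCol Δ x y ∈ C) (X : Set ℕ) :
    colourSet Δ X ⊆ C := by
  rintro c ⟨x, -, y, -, hxy, rfl⟩
  exact hΔ x y hxy

lemma colourSet_finite (hC : C.Finite) (hΔ : ∀ x y, x ≠ y → edgeCol Δ x y ∈ C) (X : Set ℕ) :
    (colourSet Δ X).Finite :=
  hC.subset (colourSet_subset hΔ X)

lemma colourSet_univ {k : ℕ} (hΔ : IsColouring Δ k) : colourSet Δ univ = Finset.Icc 1 k :=
  (colourSet_subset hΔ.1 univ).antisymm fun c hc =>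
    let ⟨x, y, hxy, hc⟩ := hΔ.2 c hc
    hc ▸ edgeCol_mem_colourSet (mem_univ x) (mem_univ y) hxy

lemma exists_finset_subset_colourSet (s : Finset ℕ)
    (hs : ∀ c ∈ s, ∃ x y, x ≠ y ∧ edgeCol Δ x y = c) :
    ∃ F : Finset ℕ, ↑s ⊆ colourSet Δ F := by
  induction s using Finset.induction_on with
  | empty => exact ⟨∅, by simp⟩
  | insert c s _ ih =>
    obtain ⟨F, hF⟩ := ih fun d hd => hs d (Finset.mem_insert_of_mem hd)
    obtain ⟨x, y, hxy, rfl⟩ := hs c (Finset.mem_insert_self c s)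
    refine ⟨insert x (insert y F), ?_⟩
    rw [Finset.coe_insert]
    refine insert_subset (edgeCol_mem_colourSet (by simp) (by simp) hxy)
      (hF.trans (colourSet_mono Δ ?_))
    simpa using (subset_insert _ _).trans (subset_insert _ _)

theorem exists_infinite_colourSet_subsingleton (hC : C.Finite)
    (hΔ : ∀ x y, x ≠ y → edgeCol Δ x y ∈ C) :
    ∃ X : Set ℕ, X.Infinite ∧ (colourSet Δ X).Subsingleton := by
  set U := hyperfilter ℕ
  have hU : ∀ x, ∀ᶠ y in (U : Filter ℕ), x < y := fun x =>
    Nat.hyperfilter_le_atTop (eventually_gt_atTop x)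
  -- every vertex sends a single colour to `U`-almost every other vertex
  have hcol : ∀ x, ∃ c ∈ C, ∀ᶠ y in (U : Filter ℕ), edgeCol Δ x y = c := by
    intro x
    refine (Ultrafilter.finite_biUnion_mem_iff hC).1 ?_
    filter_upwards [hU x] with y hy
    exact mem_biUnion (hΔ x y hy.ne) rfl
  choose col hcolC hcol using hcol
  obtain ⟨α, -, hα⟩ : ∃ α ∈ C, ∀ᶠ x in (U : Filter ℕ), col x = α :=
    (Ultrafilter.finite_biUnion_mem_iff hC).1
      (Eventually.of_forall fun x => mem_biUnion (hcolC x) rfl)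
  obtain ⟨f, -, hf⟩ := exists_seq_of_forall_finset_exists (fun x => col x = α)
    (fun x y => x < y ∧ edgeCol Δ x y = α) fun s hs =>
      (hα.and ((eventually_all_finset s).2 fun x hx =>
        (hU x).and ((hcol x).mono fun y hy => hy.trans (hs x hx)))).exists
  have hfmono : StrictMono f := fun m n h => (hf m n h).1
  refine ⟨range f, infinite_range_of_injective hfmono.injective, ?_⟩
  have hmono : ∀ c ∈ colourSet Δ (range f), c = α := by
    rintro c ⟨_, ⟨m, rfl⟩, _, ⟨n, rfl⟩, hmn, rfl⟩
    rcases lt_or_gt_of_ne (fun h : m = n => hmn (congrArg f h)) with h | h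
    · exact (hf m n h).2
    · rw [edgeCol_comm]
      exact (hf n m h).2
  exact fun a ha b hb => (hmono a ha).trans (hmono b hb).symm

theorem exists_infinite_ncard_colourSet_lt_le_insert {k n : ℕ} (hΔ : IsColouring Δ k)
    (hn : 1 < n) (hnk : n ≤ k) :
    ∃ G : Set ℕ, G.Infinite ∧ ∃ v ∉ G,
      (colourSet Δ G).ncard < n ∧ n ≤ (colourSet Δ (insert v G)).ncard := by
  have hC := (Finset.Icc 1 k).finite_toSet
  obtain ⟨M, hM, hMsub⟩ := exists_infinite_colourSet_subsingleton hC hΔ.1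
  obtain ⟨F, hF⟩ := exists_finset_subset_colourSet _ hΔ.2
  have hM1 := (ncard_le_one_iff (colourSet_finite hC hΔ.1 M)).2 fun ha hb => hMsub ha hb
  have hMF : n ≤ (colourSet Δ (M ∪ F)).ncard := calc
    n ≤ (Finset.Icc 1 k : Set ℕ).ncard := by rw [ncard_coe_finset, Nat.card_Icc]; omega
    _ ≤ (colourSet Δ (M ∪ F)).ncard :=
      ncard_le_ncard (hF.trans (colourSet_mono Δ subset_union_right))
        (colourSet_finite hC hΔ.1 _)
  obtain ⟨G, hMG, v, hvG, hGn, hvGn⟩ :=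
    exists_insert_crossing (fun X => n ≤ (colourSet Δ X).ncard) F (by omega) hMF
  exact ⟨G, hM.mono hMG, v, hvG, not_le.1 hGn, hvGn⟩

end Colouring

section NewColours

variable {Δ : ℕ → ℕ → ℕ} {G S N J : Set ℕ} {v c₀ : ℕ} {u : ℕ → ℕ}

lemma colourSet_union_image_subset_biUnion (hN : 3 ≤ N.ncard) :
    colourSet Δ (S ∪ u '' N) ⊆ ⋃ c ∈ N, colourSet Δ (S ∪ u '' (N \ {c})) := by
  have hsurv : ∀ x ∈ S ∪ u '' N, ∃ a, ∀ c ≠ a, x ∈ S ∪ u '' (N \ {c}) := by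
    rintro x (hx | ⟨a, ha, rfl⟩)
    · exact ⟨0, fun c _ => Or.inl hx⟩
    · exact ⟨a, fun c hc => Or.inr ⟨a, ⟨ha, hc.symm⟩, rfl⟩⟩
  rintro _ ⟨x, hx, y, hy, hxy, rfl⟩
  obtain ⟨a, ha⟩ := hsurv x hx
  obtain ⟨b, hb⟩ := hsurv y hy
  obtain ⟨c, hcN, hcab⟩ := exists_mem_notMem_of_ncard_lt_ncard (t := N)
    ((ncard_insert_le a {b}).trans_lt (by rw [ncard_singleton]; omega))
  simp only [mem_insert_iff, mem_singleton_iff, not_or] at hcab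
  exact mem_biUnion hcN (edgeCol_mem_colourSet (ha c hcab.1) (hb c hcab.2) hxy)

lemma colourSet_insert_union_image (hS : S.Nonempty) (hv : v ∉ S ∪ u '' J)
    (hSv : ∀ x ∈ S, edgeCol Δ v x = c₀) (hu : ∀ c ∈ J, edgeCol Δ v (u c) = c) :
    colourSet Δ (insert v (S ∪ u '' J)) = insert c₀ (colourSet Δ (S ∪ u '' J)) ∪ J := by
  have hS' : edgeCol Δ v '' S = {c₀} := by
    rw [image_congr hSv, hS.image_const]
  have hJ : edgeCol Δ v '' (u '' J) = J := by
    rw [image_image, image_congr hu, image_id']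
  rw [colourSet_insert Δ hv, image_union, hS', hJ, insert_eq, ← union_assoc,
    union_comm (colourSet Δ _)]

lemma ncard_colourSet_insert_union_image (hGfin : (colourSet Δ G).Finite) (hSG : S ⊆ G)
    (hS : S.Nonempty) (hvG : v ∉ G) (hSv : ∀ x ∈ S, edgeCol Δ v x = c₀)
    (hu : ∀ c ∈ J, u c ∈ G ∧ edgeCol Δ v (u c) = c) (hJfin : J.Finite)
    (hJ : Disjoint J (insert c₀ (colourSet Δ G))) :
    (colourSet Δ (insert v (S ∪ u '' J))).ncard =
      (insert c₀ (colourSet Δ (S ∪ u '' J))).ncard + J.ncard := by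
  have hSJ : S ∪ u '' J ⊆ G := union_subset hSG (image_subset_iff.2 fun c hc => (hu c hc).1)
  have hD : insert c₀ (colourSet Δ (S ∪ u '' J)) ⊆ insert c₀ (colourSet Δ G) :=
    insert_subset_insert (colourSet_mono Δ hSJ)
  rw [colourSet_insert_union_image hS (fun h => hvG (hSJ h)) hSv fun c hc => (hu c hc).2,
    ncard_union_eq (hJ.symm.mono_left hD) ((hGfin.insert c₀).subset hD) hJfin]

lemma ncard_insert_colourSet_sdiff_singleton_add_le
    (hgap : ∀ X : Set ℕ, X.Infinite → 5 ≤ (colourSet Δ X).ncard → 7 < (colourSet Δ X).ncard)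
    (hGfin : (colourSet Δ G).Finite) (hSG : S ⊆ G) (hS : S.Infinite) (hvG : v ∉ G)
    (hSv : ∀ x ∈ S, edgeCol Δ v x = c₀) (hu : ∀ c ∈ N, u c ∈ G ∧ edgeCol Δ v (u c) = c)
    (hNfin : N.Finite) (hN : Disjoint N (insert c₀ (colourSet Δ G)))
    (hbudget : (insert c₀ (colourSet Δ G)).ncard + N.ncard ≤ 8) {c : ℕ} (hc : c ∈ N) :
    (insert c₀ (colourSet Δ (S ∪ u '' (N \ {c})))).ncard + N.ncard ≤ 5 := by
  have hJ : N \ {c} ⊆ N := sdiff_subset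
  have hcount := ncard_colourSet_insert_union_image hGfin hSG hS.nonempty hvG hSv
    (fun c hc => hu c (hJ hc)) (hNfin.subset hJ) (hN.mono_left hJ)
  have hD := ncard_le_ncard (insert_subset_insert (colourSet_mono Δ (union_subset hSG
    (image_subset_iff.2 fun c hc => (hu c (hJ hc)).1)))) (hGfin.insert c₀)
  have hJcard := ncard_sdiff_singleton_of_mem hc
  have hNpos := (ncard_pos hNfin).2 ⟨c, hc⟩
  -- fewer than eight colours, hence at most four
  have := hgap (insert v (S ∪ u '' (N \ {c})))
    (hS.mono (subset_union_left.trans (subset_insert _ _)))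
  omega

theorem false_of_three_le_ncard_new_colours
    (hgap : ∀ X : Set ℕ, X.Infinite → 5 ≤ (colourSet Δ X).ncard → 7 < (colourSet Δ X).ncard)
    (hGfin : (colourSet Δ G).Finite) (hSG : S ⊆ G) (hS : S.Infinite) (hvG : v ∉ G)
    (hSv : ∀ x ∈ S, edgeCol Δ v x = c₀) (hN : N ⊆ edgeCol Δ v '' G \ insert c₀ (colourSet Δ G))
    (hN3 : 3 ≤ N.ncard) (hbudget : (insert c₀ (colourSet Δ G)).ncard + N.ncard ≤ 8)
    (hP : 5 ≤ (insert c₀ (colourSet Δ S)).ncard + N.ncard) : False := by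
  have hNfin : N.Finite := finite_of_ncard_pos (by omega)
  set u := Function.invFunOn (edgeCol Δ v) G
  have hu : ∀ c ∈ N, u c ∈ G ∧ edgeCol Δ v (u c) = c := fun c hc =>
    ⟨Function.invFunOn_mem (hN hc).1, Function.invFunOn_eq (hN hc).1⟩
  have hNB : Disjoint N (insert c₀ (colourSet Δ G)) :=
    disjoint_of_subset_left hN disjoint_sdiff_left
  have hBfin : (insert c₀ (colourSet Δ G)).Finite := hGfin.insert c₀
  have hDB : ∀ J ⊆ N, insert c₀ (colourSet Δ (S ∪ u '' J)) ⊆ insert c₀ (colourSet Δ G) :=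
    fun J hJ => insert_subset_insert (colourSet_mono Δ
      (union_subset hSG (image_subset_iff.2 fun c hc => (hu c (hJ hc)).1)))
  set P := insert c₀ (colourSet Δ S)
  have hPD : ∀ J, P ⊆ insert c₀ (colourSet Δ (S ∪ u '' J)) := fun J =>
    insert_subset_insert (colourSet_mono Δ subset_union_left)
  have hdrop : ∀ c ∈ N, insert c₀ (colourSet Δ (S ∪ u '' (N \ {c}))) = P := fun c hc =>
    have := ncard_insert_colourSet_sdiff_singleton_add_le hgap hGfin hSG hS hvG hSv hu hNfin hNB
      hbudget hc
    (eq_of_subset_of_ncard_le (hPD _) (by omega) (hBfin.subset (hDB _ sdiff_subset))).symm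
  have hfull : insert c₀ (colourSet Δ (S ∪ u '' N)) ⊆ P := insert_subset (mem_insert c₀ _) <|
    (colourSet_union_image_subset_biUnion hN3).trans <| iUnion₂_subset fun c hc =>
      (subset_insert _ _).trans (hdrop c hc).le
  obtain ⟨c, hc⟩ := nonempty_of_ncard_ne_zero (s := N) (by omega)
  have hPle := ncard_insert_colourSet_sdiff_singleton_add_le hgap hGfin hSG hS hvG hSv hu hNfin
    hNB hbudget hc
  rw [hdrop c hc] at hPle
  have hTN := ncard_colourSet_insert_union_image hGfin hSG hS.nonempty hvG hSv hu hNfin hNB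
  have hPfin : P.Finite := hBfin.subset (insert_subset_insert (colourSet_mono Δ hSG))
  have hDN := ncard_le_ncard hfull hPfin
  have hPN := ncard_le_ncard (hPD N) (hBfin.subset (hDB N subset_rfl))
  have := hgap (insert v (S ∪ u '' N)) (hS.mono (subset_union_left.trans (subset_insert _ _)))
  omega

theorem false_of_four_le_ncard_new_colours {C : Set ℕ} (hC : C.Finite)
    (hΔ : ∀ x y, x ≠ y → edgeCol Δ x y ∈ C)
    (hgap : ∀ X : Set ℕ, X.Infinite → 5 ≤ (colourSet Δ X).ncard → 7 < (colourSet Δ X).ncard)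
    (hG : G.Infinite) (hvG : v ∉ G) (hG4 : (colourSet Δ G).ncard ≤ 4)
    (hnew : 4 ≤ (edgeCol Δ v '' G \ colourSet Δ G).ncard) : False := by
  have hfin := colourSet_finite hC hΔ
  obtain ⟨c₀, hS⟩ :=
    hG.exists_infinite_fiber (fun x hx => hΔ v x (ne_of_mem_of_not_mem hx hvG).symm) hC
  set S := {x ∈ G | edgeCol Δ v x = c₀}
  have hSG : S ⊆ G := sep_subset _ _
  have hSv : ∀ x ∈ S, edgeCol Δ v x = c₀ := fun x hx => hx.2
  by_cases hc₀ : c₀ ∈ colourSet Δ G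
  · obtain ⟨N, hN, hN4⟩ := exists_subset_card_eq hnew
    have hP := (ncard_pos ((hfin S).insert c₀)).2 (insert_nonempty c₀ (colourSet Δ S))
    rw [← insert_eq_of_mem hc₀] at hN hG4
    exact false_of_three_le_ncard_new_colours hgap (hfin G) hSG hS hvG hSv hN
      (by omega) (by omega) (by omega)
  · have h3 : 3 ≤ (edgeCol Δ v '' G \ insert c₀ (colourSet Δ G)).ncard := by
      rw [insert_eq, union_comm, ← sdiff_sdiff]
      have := le_ncard_sdiff {c₀} (edgeCol Δ v '' G \ colourSet Δ G)
      rw [ncard_singleton] at this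
      omega
    obtain ⟨N, hN, hN3⟩ := exists_subset_card_eq h3
    have hSpos := (ncard_pos (hfin S)).2 (colourSet_nonempty hS.nontrivial)
    have hP := ncard_insert_of_notMem (fun h => hc₀ (colourSet_mono Δ hSG h)) (hfin S)
    have hB := ncard_insert_le c₀ (colourSet Δ G)
    exact false_of_three_le_ncard_new_colours hgap (hfin G) hSG hS hvG hSv hN
      (by omega) (by omega) (by omega)

end NewColours

theorem exists_infinite_five_le_ncard_colourSet_le_seven {Δ : ℕ → ℕ → ℕ} {k : ℕ}
    (hΔ : IsColouring Δ k) (hk : 8 ≤ k) :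
    ∃ X : Set ℕ, X.Infinite ∧ 5 ≤ (colourSet Δ X).ncard ∧ (colourSet Δ X).ncard ≤ 7 := by
  by_contra! hgap
  obtain ⟨G, hG, v, hvG, hG8, hvG8⟩ := exists_infinite_ncard_colourSet_lt_le_insert hΔ
    (by norm_num) hk
  have hG4 : (colourSet Δ G).ncard ≤ 4 := by have := hgap G hG; omega
  have hnew : 4 ≤ (edgeCol Δ v '' G \ colourSet Δ G).ncard := by
    rw [colourSet_insert Δ hvG, ← union_sdiff_self] at hvG8
    have := ncard_union_le (colourSet Δ G) (edgeCol Δ v '' G \ colourSet Δ G)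
    omega
  exact false_of_four_le_ncard_new_colours (Finset.Icc 1 k).finite_toSet hΔ.1 hgap hG hvG hG4
    hnew

/-- For every `k ≥ 5` and every surjective colouring `Δ : ℕ^(2) ↠ [k]`,
`F_Δ ∩ {5, 6, 7} ≠ ∅`. -/
theorem FSet_meets_five_six_seven (k : ℕ) (hk : 5 ≤ k) (Δ : ℕ → ℕ → ℕ)
    (hΔ : IsColouring Δ k) :
    ∃ m ∈ FSet Δ k, m = 5 ∨ m = 6 ∨ m = 7 := by
  rcases le_or_gt k 7 with hk7 | hk8
  · refine ⟨k, ⟨Finset.mem_Icc.2 ⟨by omega, le_rfl⟩, univ, infinite_univ, ?_⟩, by omega⟩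
    rw [colourSet_univ hΔ, ncard_coe_finset, Nat.card_Icc, Nat.add_sub_cancel]
  · obtain ⟨X, hX, h5, h7⟩ := exists_infinite_five_le_ncard_colourSet_le_seven hΔ hk8
    exact ⟨_, ⟨Finset.mem_Icc.2 ⟨by omega, by omega⟩, X, hX, rfl⟩, by omega⟩
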